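/- Let q > 1, α = 0, β = √(2/(q−1)) and u > 0 a C⁴ solution of −Δ²u = u^{−q} in ℝⁿ, n ≥ 3. If for every R > 0 the inequality −Δu/u + β u^{−(q+1)/2} ≤ C/R² holds on B_R with C independent of R, then Δu ≥ √(2/(q−1)) u^{−(q−1)/2} everywhere in ℝⁿ. -/

import Mathlib

open Real Finset

variable {n : ℕ}

/-- Partial derivative in the `i`-th coordinate direction. -/
noncomputable def pd (i : Fin n) (f : EuclideanSpace ℝ (Fin n) → ℝ) :
    EuclideanSpace ℝ (Fin n) → ℝ :=
  fun x => fderiv ℝ f x (EuclideanSpace.single i 1)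

/-- Euclidean Laplacian. -/
noncomputable def lap (f : EuclideanSpace ℝ (Fin n) → ℝ) :
    EuclideanSpace ℝ (Fin n) → ℝ :=
  fun x => ∑ i, pd i (pd i f) x

/-- Squared norm of the gradient, `|∇f|²`. -/
noncomputable def gradSq (f : EuclideanSpace ℝ (Fin n) → ℝ) :
    EuclideanSpace ℝ (Fin n) → ℝ :=
  fun x => ∑ i, (pd i f x) ^ 2

open Filter

lemma nonpos_of_eventually_le_div_sq {a C : ℝ} (h : ∀ᶠ R in atTop, a ≤ C / R ^ 2) : a ≤ 0 :=
  ge_of_tendsto (tendsto_const_nhds.div_atTop (tendsto_pow_atTop two_ne_zero)) h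

lemma mul_rpow_le_of_neg_div_add_mul_rpow_sub_one_nonpos {u L β p : ℝ} (hu : 0 < u)
    (h : -L / u + β * u ^ (p - 1) ≤ 0) : β * u ^ p ≤ L := by
  rw [rpow_sub_one hu.ne', ← mul_div_assoc, neg_div] at h
  exact (div_le_div_iff_of_pos_right hu).1 (by linarith)

theorem stmt18_general (q C : ℝ)
    (u : EuclideanSpace ℝ (Fin n) → ℝ)
    (hupos : ∀ x, 0 < u x)
    (x₀ : EuclideanSpace ℝ (Fin n))
    (hloc : ∀ R : ℝ, 0 < R → ∀ x ∈ Metric.ball x₀ R,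
      -lap u x / u x + Real.sqrt (2 / (q - 1)) * u x ^ (-(q + 1) / 2) ≤ C / R ^ 2) :
    ∀ x, lap u x ≥ Real.sqrt (2 / (q - 1)) * u x ^ (-(q - 1) / 2) := by
  intro x
  have hlim : -lap u x / u x + √(2 / (q - 1)) * u x ^ (-(q + 1) / 2) ≤ 0 :=
    nonpos_of_eventually_le_div_sq <| (eventually_gt_atTop (dist x x₀)).mono fun R hR =>
      hloc R (dist_nonneg.trans_lt hR) x (Metric.mem_ball.2 hR)
  rw [show -(q + 1) / 2 = -(q - 1) / 2 - 1 by ring] at hlim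
  exact mul_rpow_le_of_neg_div_add_mul_rpow_sub_one_nonpos (hupos x) hlim

/-- Guo–Wei inequality from the local estimate with `α = 0`. -/
theorem stmt18 (hn : 3 ≤ n) (q C : ℝ) (hq : 1 < q) (hC : 0 < C)
    (u : EuclideanSpace ℝ (Fin n) → ℝ) (hu : ContDiff ℝ 4 u)
    (hupos : ∀ x, 0 < u x)
    (heq : ∀ x, -lap (lap u) x = u x ^ (-q))
    (x₀ : EuclideanSpace ℝ (Fin n))
    (hloc : ∀ R : ℝ, 0 < R → ∀ x ∈ Metric.ball x₀ R,
      -lap u x / u x + Real.sqrt (2 / (q - 1)) * u x ^ (-(q + 1) / 2) ≤ C / R ^ 2) :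
    ∀ x, lap u x ≥ Real.sqrt (2 / (q - 1)) * u x ^ (-(q - 1) / 2) :=
  stmt18_general q C u hupos x₀ hloc
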